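/- arXiv:1910.06615 — 5 statements merged into one kernel-verified Lean document; each statement's English description precedes it below -/
import Mathlib

section
/- Let A(s) be the 3×3 real matrix with rows (cos s, 0, sin s), (sin s, 0, -cos s), (0, 1, 0). Let P4(s) denote the first column of A(s)⁴ and P0 = (1,0,0). Then lim_{s→0} (P4(s) - P0)/s³ = (0, 1/2, -1/2). -/
/-!
With `c = cos s` and `σ = sin s`, the relation `c² + σ² = 1` brings the first column of `A(s)⁴`,
minus `e₁`, to the form `((c - 1)³ (c + 1), σ (c - 1) (c² - c - 1), σ c (c - 1))`. Writing
`σ = s · sinc s` and `c - 1 = -(s² / 2) · sinc (s / 2)²` cancels `s³` exactly, so for `s ≠ 0` the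
rescaled gap agrees with a continuous function of `s`, whose value at `0` is `(0, 1/2, -1/2)`.
-/

open Real Matrix Filter

namespace Real

theorem sin_eq_mul_sinc (x : ℝ) : sin x = x * sinc x := by
  rcases eq_or_ne x 0 with rfl | hx
  · simp
  · rw [sinc_of_ne_zero hx]; field_simp

theorem cos_sub_one_eq_mul_sinc_half_sq (x : ℝ) :
    cos x - 1 = -(x ^ 2 / 2) * sinc (x / 2) ^ 2 := by
  have hcos : cos x = 1 - 2 * sin (x / 2) ^ 2 := by
    have h := cos_two_mul' (x / 2)
    rw [mul_div_cancel₀ x two_ne_zero] at h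
    linear_combination h + cos_sq_add_sin_sq (x / 2)
  rw [hcos, sin_eq_mul_sinc]; ring

end Real

def sphereLegMatrix {R : Type*} [CommRing R] (c σ : R) : Matrix (Fin 3) (Fin 3) R :=
  !![c, 0, σ; σ, 0, -c; 0, 1, 0]

theorem sphereLegMatrix_pow_four_col_zero_sub {R : Type*} [CommRing R] {c σ : R}
    (h : c ^ 2 + σ ^ 2 = 1) :
    (fun i => (sphereLegMatrix c σ ^ 4) i 0) - ![1, 0, 0] =
      ![(c - 1) ^ 3 * (c + 1), σ * (c - 1) * (c ^ 2 - c - 1), σ * c * (c - 1)] := by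
  ext i
  fin_cases i <;> simp [sphereLegMatrix, pow_succ, mul_apply, Fin.sum_univ_three] <;> grind

/-- On the unit sphere, the gap `P₄(s) - P₀` of the geodesic quadrilateral, divided by
`s³`, tends to `(0, 1/2, -1/2) = (1/2)(u - v)` as `s → 0`. -/
theorem sphere_quadrilateral_gap_P4 :
    Tendsto
      (fun s : ℝ =>
        (s ^ 3)⁻¹ •
          ((fun i => ((!![Real.cos s, 0, Real.sin s;
              Real.sin s, 0, -Real.cos s;
              0, 1, 0] : Matrix (Fin 3) (Fin 3) ℝ) ^ 4) i 0)
            - ![1, 0, 0]))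
      (nhdsWithin 0 {s : ℝ | s ≠ 0})
      (nhds ![0, 1/2, -1/2]) := by
  set k : ℝ → ℝ := fun s => -(1 / 2) * sinc (s / 2) ^ 2
  set G : ℝ → Fin 3 → ℝ := fun s =>
    ![s ^ 3 * k s ^ 3 * (cos s + 1), sinc s * k s * (cos s ^ 2 - cos s - 1), sinc s * k s * cos s]
  have hG : Continuous G := by fun_prop
  have hG0 : G 0 = ![0, 1 / 2, -1 / 2] := by
    ext i; fin_cases i <;> norm_num [G, k]
  rw [← hG0]
  refine ((hG.tendsto 0).mono_left nhdsWithin_le_nhds).congr' ?_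
  filter_upwards [self_mem_nhdsWithin] with s (hs : s ≠ 0)
  change G s = (s ^ 3)⁻¹ • ((fun i => (sphereLegMatrix (cos s) (sin s) ^ 4) i 0) - ![1, 0, 0])
  rw [sphereLegMatrix_pow_four_col_zero_sub (cos_sq_add_sin_sq s), sin_eq_mul_sinc,
    cos_sub_one_eq_mul_sinc_half_sq]
  simp only [G, k, smul_cons, smul_empty, smul_eq_mul, vecCons_inj, and_true]
  refine ⟨?_, ?_, ?_⟩ <;> field_simp
end

section
/- Let A(s) be the 3×3 real matrix with rows (cos s, 0, sin s), (sin s, 0, -cos s), (0, 1, 0). Let P2(s) be the first column of A(s)² and Q2(s) the first column of A(s)⁻². Then lim_{s→0} (Q2(s) - P2(s))/s³ = (0, 1/2, -1/2). -/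
open Real Matrix Filter

private lemma sin_div_lim' : Tendsto (fun x : ℝ => Real.sin x / x)
    (nhdsWithin 0 {s : ℝ | s ≠ 0}) (nhds 1) := by
  have h := (Real.hasDerivAt_sin 0)
  rw [hasDerivAt_iff_tendsto_slope] at h
  simp only [Real.cos_zero] at h
  refine h.congr fun x => ?_
  simp [slope_def_field, div_eq_inv_mul]

private lemma one_sub_cos_lim' : Tendsto (fun x : ℝ => (1 - Real.cos x) / x ^ 2)
    (nhdsWithin 0 {s : ℝ | s ≠ 0}) (nhds (1/2)) := by
  have hhalf : Tendsto (fun x : ℝ => x / 2) (nhdsWithin (0:ℝ) {s : ℝ | s ≠ 0})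
      (nhdsWithin (0:ℝ) {s : ℝ | s ≠ 0}) := by
    apply tendsto_nhdsWithin_of_tendsto_nhds_of_eventually_within
    · have : Tendsto (fun x : ℝ => x / 2) (nhds 0) (nhds 0) := by
        simpa using (tendsto_id : Tendsto id (nhds (0:ℝ)) (nhds 0)).div_const 2
      exact this.mono_left nhdsWithin_le_nhds
    · filter_upwards [self_mem_nhdsWithin] with x hx
      exact div_ne_zero hx two_ne_zero
  have h := ((sin_div_lim'.comp hhalf).mul (sin_div_lim'.comp hhalf)).div_const 2
  norm_num at h
  refine h.congr' ?_
  filter_upwards [self_mem_nhdsWithin] with x hx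
  have hx : x ≠ 0 := hx
  have hc : Real.cos x = 1 - 2 * Real.sin (x/2)^2 := by
    have h1 := Real.cos_two_mul (x/2)
    have h2 := Real.sin_sq_add_cos_sq (x/2)
    have hx2 : 2*(x/2) = x := by ring
    rw [hx2] at h1; nlinarith
  show Real.sin (x / 2) / (x / 2) * (Real.sin (x / 2) / (x / 2)) / 2 = (1 - Real.cos x) / x ^ 2
  rw [hc]; field_simp; ring

/-- On the unit sphere, the gap `Q₂(s) - P₂(s)` of the two routes around the geodesic
quadrilateral, divided by `s³`, tends to `(0, 1/2, -1/2)` as `s → 0`. -/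
theorem sphere_quadrilateral_gap_Q2_P2 :
    Tendsto
      (fun s : ℝ =>
        (s ^ 3)⁻¹ •
          ((fun i => (((!![Real.cos s, 0, Real.sin s;
              Real.sin s, 0, -Real.cos s;
              0, 1, 0] : Matrix (Fin 3) (Fin 3) ℝ))⁻¹ ^ 2) i 0)
            - fun i => (((!![Real.cos s, 0, Real.sin s;
              Real.sin s, 0, -Real.cos s;
              0, 1, 0] : Matrix (Fin 3) (Fin 3) ℝ)) ^ 2) i 0))
      (nhdsWithin 0 {s : ℝ | s ≠ 0})
      (nhds ![0, 1/2, -1/2]) := by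
  have hmain : Tendsto
      (fun s : ℝ => (![0, (Real.sin s / s) * ((1 - Real.cos s) / s ^ 2),
        -((Real.sin s / s) * ((1 - Real.cos s) / s ^ 2))] : Fin 3 → ℝ))
      (nhdsWithin 0 {s : ℝ | s ≠ 0}) (nhds ![0, 1/2, -1/2]) := by
    rw [tendsto_pi_nhds]
    intro i
    fin_cases i
    · simpa using tendsto_const_nhds
    · simpa using sin_div_lim'.mul one_sub_cos_lim'
    · have h := (sin_div_lim'.mul one_sub_cos_lim').neg
      norm_num at h ⊢
      exact h
  refine hmain.congr' ?_
  filter_upwards [self_mem_nhdsWithin] with s hs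
  have hs : s ≠ 0 := hs
  have hinv : (!![Real.cos s, 0, Real.sin s;
      Real.sin s, 0, -Real.cos s;
      0, 1, 0] : Matrix (Fin 3) (Fin 3) ℝ)⁻¹
      = !![Real.cos s, Real.sin s, 0; 0, 0, 1; Real.sin s, -Real.cos s, 0] := by
    apply Matrix.inv_eq_right_inv
    ext i j
    fin_cases i <;> fin_cases j <;>
      simp [Matrix.mul_apply, Fin.sum_univ_three] <;>
      nlinarith [Real.sin_sq_add_cos_sq s]
  rw [hinv]
  funext i
  fin_cases i <;>
      simp [sq, Matrix.mul_apply, Fin.sum_univ_three, Matrix.smul_apply, Pi.sub_apply] <;>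
      (try field_simp) <;> ring
end

section
/- Let B(s) be the 3×3 matrix with rows (cosh s, 0, -sinh s), (sinh s, 0, -cosh s), (0, 1, 0), let P4(s) be the first column of B(s)⁴ and P0 = (1,0,0). Then lim_{s→0} (P4(s) - P0)/s³ = (0, -1/2, 1/2). -/
open Real Matrix Filter

private lemma sinh_div_lim :
    Tendsto (fun s : ℝ => Real.sinh s / s) (nhdsWithin 0 {s | s ≠ 0}) (nhds 1) := by
  have h := (hasDerivAt_iff_tendsto_slope.mp (by simpa using Real.hasDerivAt_sinh 0))
  refine h.congr fun s => ?_
  simp [slope_def_field, div_eq_inv_mul]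

private lemma half_map :
    Tendsto (fun s : ℝ => s / 2) (nhdsWithin 0 {s : ℝ | s ≠ 0})
      (nhdsWithin 0 {s : ℝ | s ≠ 0}) := by
  apply tendsto_nhdsWithin_of_tendsto_nhds_of_eventually_within
  · have : Continuous fun s : ℝ => s / 2 := continuous_id.div_const 2
    simpa using (this.tendsto 0).mono_left nhdsWithin_le_nhds
  · filter_upwards [self_mem_nhdsWithin] with s hs
    exact div_ne_zero hs two_ne_zero

private lemma cosh_sub_one_lim :
    Tendsto (fun s : ℝ => (Real.cosh s - 1) / s ^ 2) (nhdsWithin 0 {s | s ≠ 0})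
      (nhds (1 / 2)) := by
  have h2 : Tendsto (fun s : ℝ => Real.sinh (s / 2) / (s / 2)) (nhdsWithin 0 {s | s ≠ 0})
      (nhds 1) := sinh_div_lim.comp half_map
  have h3 : Tendsto (fun s : ℝ => (1 / 2) * (Real.sinh (s / 2) / (s / 2)) ^ 2)
      (nhdsWithin 0 {s | s ≠ 0}) (nhds ((1 / 2) * 1 ^ 2)) :=
    tendsto_const_nhds.mul (h2.pow 2)
  rw [show ((1:ℝ)/2) = (1/2) * 1 ^ 2 by norm_num]
  refine h3.congr' ?_
  filter_upwards [self_mem_nhdsWithin] with s hs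
  have hs : s ≠ 0 := hs
  have hc : Real.cosh s - 1 = 2 * Real.sinh (s / 2) ^ 2 := by
    have := Real.cosh_sq (s / 2)
    have h2 := Real.cosh_two_mul (s / 2)
    rw [show 2 * (s / 2) = s by ring] at h2
    nlinarith [this, h2]
  rw [hc]
  field_simp

private lemma cosh_lim :
    Tendsto (fun s : ℝ => Real.cosh s) (nhdsWithin 0 {s : ℝ | s ≠ 0}) (nhds 1) := by
  simpa using (Real.continuous_cosh.tendsto 0).mono_left nhdsWithin_le_nhds

private lemma comp0 :
    Tendsto (fun s : ℝ => (s ^ 3)⁻¹ * (Real.cosh s ^ 4 - 2 * Real.cosh s * Real.sinh s ^ 2 - 1))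
      (nhdsWithin 0 {s : ℝ | s ≠ 0}) (nhds 0) := by
  have h : Tendsto (fun s : ℝ =>
      ((Real.cosh s - 1) / s ^ 2) ^ 3 * (Real.cosh s + 1) * s ^ 3)
      (nhdsWithin 0 {s : ℝ | s ≠ 0}) (nhds ((1 / 2) ^ 3 * (1 + 1) * 0 ^ 3)) := by
    refine (((cosh_sub_one_lim.pow 3).mul (cosh_lim.add tendsto_const_nhds)).mul ?_)
    exact ((continuous_pow 3).tendsto 0).mono_left nhdsWithin_le_nhds
  norm_num at h
  refine h.congr' ?_
  filter_upwards [self_mem_nhdsWithin] with s hs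
  have hs : s ≠ 0 := hs
  have hsq : Real.sinh s ^ 2 = Real.cosh s ^ 2 - 1 := by
    have := Real.cosh_sq s; linarith
  rw [hsq]
  field_simp
  ring

private lemma comp1 :
    Tendsto (fun s : ℝ => (s ^ 3)⁻¹ *
        (Real.cosh s ^ 3 * Real.sinh s - Real.cosh s ^ 2 * Real.sinh s - Real.sinh s ^ 3))
      (nhdsWithin 0 {s : ℝ | s ≠ 0}) (nhds (-(1 / 2))) := by
  have h : Tendsto (fun s : ℝ =>
      Real.cosh s ^ 2 * (Real.sinh s / s) * ((Real.cosh s - 1) / s ^ 2)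
        - (Real.sinh s / s) ^ 3)
      (nhdsWithin 0 {s : ℝ | s ≠ 0}) (nhds (1 ^ 2 * 1 * (1 / 2) - 1 ^ 3)) :=
    (((cosh_lim.pow 2).mul sinh_div_lim).mul cosh_sub_one_lim).sub (sinh_div_lim.pow 3)
  norm_num at h
  refine h.congr' ?_
  filter_upwards [self_mem_nhdsWithin] with s hs
  have hs : s ≠ 0 := hs
  field_simp

private lemma comp2 :
    Tendsto (fun s : ℝ => (s ^ 3)⁻¹ *
        (Real.cosh s ^ 2 * Real.sinh s - Real.cosh s * Real.sinh s))
      (nhdsWithin 0 {s : ℝ | s ≠ 0}) (nhds (1 / 2)) := by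
  have h : Tendsto (fun s : ℝ =>
      Real.cosh s * (Real.sinh s / s) * ((Real.cosh s - 1) / s ^ 2))
      (nhdsWithin 0 {s : ℝ | s ≠ 0}) (nhds (1 * 1 * (1 / 2))) :=
    (cosh_lim.mul sinh_div_lim).mul cosh_sub_one_lim
  norm_num at h
  refine h.congr' ?_
  filter_upwards [self_mem_nhdsWithin] with s hs
  have hs : s ≠ 0 := hs
  field_simp

/-- On the unit hyperboloid (curvature -1), the gap `P₄(s) - P₀`, divided by `s³`,
tends to `(0, -1/2, 1/2) = -(1/2)(u - v)` as `s → 0`. -/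
theorem hyperboloid_quadrilateral_gap_P4 :
    Tendsto
      (fun s : ℝ =>
        (s ^ 3)⁻¹ •
          ((fun i => ((!![Real.cosh s, 0, -Real.sinh s;
              Real.sinh s, 0, -Real.cosh s;
              0, 1, 0] : Matrix (Fin 3) (Fin 3) ℝ) ^ 4) i 0)
            - ![1, 0, 0]))
      (nhdsWithin 0 {s : ℝ | s ≠ 0})
      (nhds ![0, -(1/2), 1/2]) := by
  rw [tendsto_pi_nhds]
  intro i
  fin_cases i
  · refine comp0.congr fun s => ?_
    simp only [Pi.smul_apply, Pi.sub_apply, smul_eq_mul]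
    congr 1
    simp [pow_succ, Matrix.mul_apply, Fin.sum_univ_succ]
    ring
  · refine comp1.congr fun s => ?_
    simp only [Pi.smul_apply, Pi.sub_apply, smul_eq_mul]
    congr 1
    simp [pow_succ, Matrix.mul_apply, Fin.sum_univ_succ]
    ring
  · refine comp2.congr fun s => ?_
    simp only [Pi.smul_apply, Pi.sub_apply, smul_eq_mul]
    congr 1
    simp [pow_succ, Matrix.mul_apply, Fin.sum_univ_succ]
    ring
end

section
/- Let f : (-a,a) × W → ℝ be smooth, where W is an open subset of ℝⁿ. If for each fixed w₀ ∈ W the function s ↦ f(s, w₀) vanishes to order n at s = 0 (i.e., f(s,w₀) = sⁿ g(s) for some smooth g depending on w₀), then there exists a smooth function h on (-a,a) × W with f(s,w) = sⁿ h(s,w) for all (s,w). -/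
/-!
Taylor's formula with integral remainder for `s ↦ f (s, w)` on `[0, s]`, whose Taylor polynomial
of degree `n - 1` at `0` vanishes, gives after rescaling to `[0, 1]`
`f (s, w) = sⁿ * ∫ t in 0..1, (1 - t) ^ (n - 1) / (n - 1)! * ∂ₛⁿ f (t * s, w)`.
The integrand is jointly smooth in `(t, s, w)` on a neighbourhood of `[0, 1] × (-a, a) × W`, so
differentiating under the integral sign shows that the integral is a smooth function of `(s, w)`.
-/

open Set Filter Topology MeasureTheory
open scoped ContDiff Nat

theorem eq_pow_smul_integral_of_iteratedDeriv_eq_zero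
    {F : Type*} [NormedAddCommGroup F] [NormedSpace ℝ F] [CompleteSpace F]
    {f : ℝ → F} {m : ℕ} {s : ℝ}
    (hf : ∀ t ∈ uIcc 0 s, ContDiffAt ℝ (m + 1) f t)
    (h0 : ∀ k ≤ m, iteratedDeriv k f 0 = 0) :
    f s = s ^ (m + 1) • ∫ t in (0:ℝ)..1, ((1 - t) ^ m / m !) • iteratedDeriv (m + 1) f (t * s) := by
  rcases eq_or_ne s 0 with rfl | hs
  · simpa using h0 0 (Nat.zero_le m)
  have hu : UniqueDiffOn ℝ (uIcc 0 s) := uniqueDiffOn_uIcc hs.symm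
  have htaylor := taylor_integral_remainder (x₀ := 0) (x := s) (n := m)
    (fun t ht => (hf t ht).contDiffWithinAt)
  have hpoly : taylorWithinEval f m (uIcc 0 s) 0 s = 0 := by
    rw [taylor_within_apply]
    refine Finset.sum_eq_zero fun k hk => ?_
    have hkm : k ≤ m := Nat.lt_succ_iff.1 (Finset.mem_range.1 hk)
    rw [iteratedDerivWithin_eq_iteratedDeriv hu
      ((hf 0 left_mem_uIcc).of_le (by exact_mod_cast hkm.trans m.le_succ)) left_mem_uIcc,
      h0 k hkm, smul_zero]
  have hrem : ∫ t in (0:ℝ)..s, ((s - t) ^ m / m !) • iteratedDerivWithin (m + 1) f (uIcc 0 s) t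
      = ∫ t in (0:ℝ)..s, ((s - t) ^ m / m !) • iteratedDeriv (m + 1) f t :=
    intervalIntegral.integral_congr fun t ht => by
      rw [iteratedDerivWithin_eq_iteratedDeriv hu (hf t ht) ht]
  have hsubst := intervalIntegral.smul_integral_comp_mul_right (a := 0) (b := 1)
    (fun t => ((s - t) ^ m / m !) • iteratedDeriv (m + 1) f t) s
  rw [zero_mul, one_mul] at hsubst
  rw [hpoly, sub_zero, hrem, ← hsubst] at htaylor
  rw [htaylor, pow_succ', mul_smul, ← intervalIntegral.integral_smul (s ^ m)]
  congr 1
  refine intervalIntegral.integral_congr fun t _ => ?_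
  rw [smul_smul, mul_comm t s]
  congr 1
  rw [← mul_one_sub, mul_pow, mul_div_assoc]

section PartialDerivFst

variable {E F : Type*} [NormedAddCommGroup E] [NormedSpace ℝ E]
  [NormedAddCommGroup F] [NormedSpace ℝ F] {g : ℝ × E → F} {V : Set (ℝ × E)}

noncomputable def partialDerivFst (g : ℝ × E → F) (p : ℝ × E) : F :=
  fderiv ℝ g p (1, 0)

theorem ContDiffOn.partialDerivFst (hV : IsOpen V) (hg : ContDiffOn ℝ ∞ g V) :
    ContDiffOn ℝ ∞ (partialDerivFst g) V :=
  (hg.fderiv_of_isOpen hV (by simp)).clm_apply contDiffOn_const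

theorem ContDiffOn.partialDerivFst_iterate (hV : IsOpen V) (hg : ContDiffOn ℝ ∞ g V) (k : ℕ) :
    ContDiffOn ℝ ∞ (_root_.partialDerivFst^[k] g) V := by
  induction k with
  | zero => exact hg
  | succ k ih =>
    rw [Function.iterate_succ_apply']
    exact ih.partialDerivFst hV

theorem DifferentiableAt.hasDerivAt_partialDerivFst {s : ℝ} {w : E}
    (hg : DifferentiableAt ℝ g (s, w)) :
    HasDerivAt (fun s => g (s, w)) (partialDerivFst g (s, w)) s :=
  hg.hasFDerivAt.comp_hasDerivAt s ((hasDerivAt_id s).prodMk (hasDerivAt_const s w))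

theorem iteratedDeriv_eq_partialDerivFst_iterate (hV : IsOpen V) (hg : ContDiffOn ℝ ∞ g V)
    {w : E} (k : ℕ) : ∀ s, (s, w) ∈ V →
    iteratedDeriv k (fun s => g (s, w)) s = partialDerivFst^[k] g (s, w) := by
  induction k with
  | zero => simp
  | succ k ih =>
    intro s hs
    have hslice : IsOpen {s : ℝ | (s, w) ∈ V} := hV.preimage (by fun_prop)
    have heq : iteratedDeriv k (fun s => g (s, w)) =ᶠ[𝓝 s]
        fun s => partialDerivFst^[k] g (s, w) :=
      eventually_of_mem (hslice.mem_nhds hs) ih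
    have hdiff : DifferentiableAt ℝ (partialDerivFst^[k] g) (s, w) :=
      ((hg.partialDerivFst_iterate hV k).differentiableOn (by simp)).differentiableAt
        (hV.mem_nhds hs)
    rw [iteratedDeriv_succ, heq.deriv_eq, hdiff.hasDerivAt_partialDerivFst.deriv,
      Function.iterate_succ_apply']

end PartialDerivFst

theorem IsCompact.exists_bound_of_continuousOn_of_prod_singleton_subset
    {X Y F : Type*} [TopologicalSpace X] [TopologicalSpace Y] [SeminormedAddCommGroup F]
    {K : Set X} (hK : IsCompact K) {O : Set (X × Y)} (hO : IsOpen O) {g : X × Y → F}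
    (hg : ContinuousOn g O) {y₀ : Y} (hKO : K ×ˢ {y₀} ⊆ O) :
    ∃ C, ∃ v ∈ 𝓝 y₀, ∀ x ∈ K, ∀ y ∈ v, (x, y) ∈ O ∧ ‖g (x, y)‖ ≤ C := by
  obtain ⟨C, hC⟩ := (hK.prod isCompact_singleton).exists_bound_of_continuousOn (hg.mono hKO)
  have hN : IsOpen (O ∩ (fun q => ‖g q‖) ⁻¹' Iio (C + 1)) :=
    hg.norm.isOpen_inter_preimage hO isOpen_Iio
  obtain ⟨u, v, -, hv, hKu, hy₀v, huv⟩ := generalized_tube_lemma hK isCompact_singleton hN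
    fun q hq => ⟨hKO hq, (hC q hq).trans_lt (lt_add_one C)⟩
  refine ⟨C + 1, v, hv.mem_nhds (hy₀v rfl), fun x hx y hy => ?_⟩
  obtain ⟨hxyO, hxyC⟩ := huv (mk_mem_prod (hKu hx) hy)
  exact ⟨hxyO, le_of_lt hxyC⟩

section ParametricIntervalIntegral

universe u

-- one universe for `E` and `F`: the induction below replaces `F` by `E →L[ℝ] F`
variable {E F : Type u} [NormedAddCommGroup E] [NormedSpace ℝ E]
  [NormedAddCommGroup F] [NormedSpace ℝ F]
  {a b : ℝ} {O : Set (ℝ × E)} {g : ℝ × E → F}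

theorem hasFDerivAt_intervalIntegral_of_contDiffOn (hO : IsOpen O) (hg : ContDiffOn ℝ 1 g O)
    {p₀ : E} (hp₀ : uIcc a b ×ˢ {p₀} ⊆ O) :
    HasFDerivAt (fun p => ∫ t in a..b, g (t, p))
      (∫ t in a..b, fderiv ℝ g (t, p₀) ∘L ContinuousLinearMap.inr ℝ ℝ E) p₀ := by
  set g' : ℝ × E → E →L[ℝ] F := fun q => fderiv ℝ g q ∘L ContinuousLinearMap.inr ℝ ℝ E
  have hg' : ContinuousOn g' O :=
    (hg.continuousOn_fderiv_of_isOpen hO le_rfl).clm_comp continuousOn_const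
  obtain ⟨C, v, hv, hvO⟩ :=
    isCompact_uIcc.exists_bound_of_continuousOn_of_prod_singleton_subset hO hg' hp₀
  have hslice : ∀ p ∈ v, MapsTo (fun t => (t, p)) (uIcc a b) O := fun p hp t ht =>
    (hvO t ht p hp).1
  have hint : ∀ p ∈ v, IntervalIntegrable (fun t => g (t, p)) volume a b := fun p hp =>
    (hg.continuousOn.comp (by fun_prop) (hslice p hp)).intervalIntegrable
  have hint' : IntervalIntegrable (fun t => g' (t, p₀)) volume a b :=
    (hg'.comp (by fun_prop) (hslice p₀ (mem_of_mem_nhds hv))).intervalIntegrable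
  refine hasFDerivAt_integral_of_dominated_of_fderiv_le''
    (F' := fun p t => g' (t, p)) (bound := fun _ => C) hv
    (eventually_of_mem hv fun p hp => (hint p hp).def'.aestronglyMeasurable)
    (hint p₀ (mem_of_mem_nhds hv)) hint'.def'.aestronglyMeasurable ?_
    intervalIntegrable_const ?_
  all_goals filter_upwards [ae_restrict_mem measurableSet_uIoc] with t ht p hp
  · exact (hvO t (uIoc_subset_uIcc ht) p hp).2
  · have hmem := (hvO t (uIoc_subset_uIcc ht) p hp).1
    exact (((hg.differentiableOn one_ne_zero) _ hmem).differentiableAt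
      (hO.mem_nhds hmem)).hasFDerivAt.comp p (hasFDerivAt_prodMk_right t p)

theorem contDiffOn_intervalIntegral_of_contDiffOn {U : Set E} (hU : IsOpen U) (hO : IsOpen O)
    (hUO : uIcc a b ×ˢ U ⊆ O) (hg : ContDiffOn ℝ ∞ g O) :
    ContDiffOn ℝ ∞ (fun p => ∫ t in a..b, g (t, p)) U := by
  have hsub : ∀ p ∈ U, uIcc a b ×ˢ {p} ⊆ O := fun p hp =>
    (prod_mono subset_rfl (singleton_subset_iff.2 hp)).trans hUO
  refine contDiffOn_infty.2 fun m => ?_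
  induction m generalizing F with
  | zero =>
    exact contDiffOn_zero.2 fun p hp => (hasFDerivAt_intervalIntegral_of_contDiffOn hO
      (hg.of_le (by simp)) (hsub p hp)).continuousAt.continuousWithinAt
  | succ m ih =>
    have hderiv := fun p hp => hasFDerivAt_intervalIntegral_of_contDiffOn hO
      (hg.of_le (by simp)) (hsub p hp)
    rw [Nat.cast_succ, contDiffOn_succ_iff_fderiv_of_isOpen hU]
    refine ⟨fun p hp => (hderiv p hp).differentiableAt.differentiableWithinAt, by simp, ?_⟩
    exact (ih ((hg.fderiv_of_isOpen hO (by simp)).clm_comp contDiffOn_const)).congr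
      fun p hp => (hderiv p hp).fderiv

end ParametricIntervalIntegral

theorem mul_mem_Ioo_neg_self_of_mem_uIcc {a s t : ℝ} (hs : s ∈ Ioo (-a) a)
    (ht : t ∈ uIcc 0 1) : t * s ∈ Ioo (-a) a := by
  rw [uIcc_of_le zero_le_one] at ht
  rw [mem_Ioo, ← abs_lt] at hs ⊢
  rw [abs_mul]
  exact (mul_le_of_le_one_left (abs_nonneg s) (abs_le.2 ⟨by linarith [ht.1], ht.2⟩)).trans_lt hs

/-- If a smooth function `f` on `(-a,a) × W` vanishes to order `n` in `s` at `s = 0`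
for every `w ∈ W`, then `f = sⁿ h` for a smooth function `h` on `(-a,a) × W`. -/
theorem smooth_factor_of_pointwise_vanishing_order
    {d : ℕ} {a : ℝ} (ha : 0 < a) {W : Set (Fin d → ℝ)} (hW : IsOpen W)
    (n : ℕ) (hn : 1 ≤ n)
    (f : ℝ × (Fin d → ℝ) → ℝ)
    (hf : ContDiffOn ℝ (⊤ : ℕ∞) f (Ioo (-a) a ×ˢ W))
    (hvanish : ∀ w ∈ W, ∀ i < n, iteratedDeriv i (fun s => f (s, w)) 0 = 0) :
    ∃ h : ℝ × (Fin d → ℝ) → ℝ,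
      ContDiffOn ℝ (⊤ : ℕ∞) h (Ioo (-a) a ×ˢ W) ∧
      ∀ p ∈ Ioo (-a) a ×ˢ W, f p = p.1 ^ n * h p := by
  obtain ⟨m, rfl⟩ := Nat.exists_eq_add_of_le' hn
  set V := Ioo (-a) a ×ˢ W
  have hV : IsOpen V := isOpen_Ioo.prod hW
  set D := partialDerivFst^[m + 1] f
  refine ⟨fun p => ∫ t in (0:ℝ)..1, ((1 - t) ^ m / m !) * D (t * p.1, p.2), ?_, ?_⟩
  · have hψ : ContDiff ℝ ∞ fun q : ℝ × ℝ × (Fin d → ℝ) => (q.1 * q.2.1, q.2.2) := by fun_prop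
    refine contDiffOn_intervalIntegral_of_contDiffOn
      (g := fun q => (1 - q.1) ^ m / m ! * D (q.1 * q.2.1, q.2.2)) hV (hV.preimage hψ.continuous)
      (fun q hq => ⟨mul_mem_Ioo_neg_self_of_mem_uIcc hq.2.1 hq.1, hq.2.2⟩) ?_
    exact (ContDiff.contDiffOn (by fun_prop)).mul
      ((hf.partialDerivFst_iterate hV _).comp hψ.contDiffOn fun q hq => hq)
  · rintro ⟨s, w⟩ ⟨hs, hw⟩
    have hslice : ∀ t ∈ uIcc 0 s, ContDiffAt ℝ (m + 1) (fun s => f (s, w)) t := by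
      intro t ht
      have htw : (t, w) ∈ V := ⟨ordConnected_Ioo.uIcc_subset ⟨neg_lt_zero.2 ha, ha⟩ hs ht, hw⟩
      exact ((hf.contDiffAt (hV.mem_nhds htw)).comp t
        (contDiffAt_id.prodMk contDiffAt_const)).of_le (by exact_mod_cast le_top)
    rw [eq_pow_smul_integral_of_iteratedDeriv_eq_zero hslice
      fun k hk => hvanish w hw k (Nat.lt_succ_of_le hk), smul_eq_mul]
    congr 1
    refine intervalIntegral.integral_congr fun t ht => ?_
    rw [smul_eq_mul, iteratedDeriv_eq_partialDerivFst_iterate hV hf _ _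
      ⟨mul_mem_Ioo_neg_self_of_mem_uIcc hs ht, hw⟩]
end

section
/- Let ξ and η be smooth vector fields on ℝᵈ with flows φ_s and ψ_s, and let P₄(s) = ψ_{-s}(φ_{-s}(ψ_s(φ_s(P₀)))). Then for any smooth function f defined near P₀, lim_{s→0} (f(P₄(s)) - f(P₀))/s² = [ξ,η]_{P₀}(f). -/
/-!
Along an integral curve `c` of a vector field `V`, the function `t ↦ g (c t)` has derivatives
`(V g) (c t)` and `(V (V g)) (c t)`, so the mean value inequality gives a second-order Taylor
expansion of `g` along each side of the quadrilateral. These expansions are uniform as the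
starting point tends to `P₀`, because a curve with `‖c'‖ < M` stays within `M |t|` of `c 0` as
long as it stays where `‖V‖ < M`. Summing the four second-order expansions of `f`, and
expanding the first-order terms `(ξ f)(P₂) - (ξ f)(P₀)` and `(η f)(P₃) - (η f)(P₁)` once more,
everything cancels except `s² (ξ (η f) - η (ξ f)) (P₀)`.
-/

open Filter Set Topology Asymptotics Metric

section Taylor

variable {F : Type*} [NormedAddCommGroup F] [NormedSpace ℝ F] {h h' h'' : ℝ → F} {L : F} {ε t : ℝ}

theorem norm_taylor_one_le (hh : ∀ u ∈ uIcc 0 t, HasDerivAt h (h' u) u)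
    (hb : ∀ u ∈ uIcc 0 t, ‖h' u - L‖ ≤ ε) : ‖h t - h 0 - t • L‖ ≤ ε * |t| := by
  have := convex_uIcc (0 : ℝ) t |>.norm_image_sub_le_of_norm_hasDerivWithin_le
    (f := fun u => h u - u • L)
    (fun u hu => ((hh u hu).sub ((hasDerivAt_id u).smul_const L)).hasDerivWithinAt)
    (by simpa using hb) left_mem_uIcc right_mem_uIcc
  simpa [sub_right_comm] using this

theorem norm_taylor_two_le (hh : ∀ u ∈ uIcc 0 t, HasDerivAt h (h' u) u)
    (hh' : ∀ u ∈ uIcc 0 t, HasDerivAt h' (h'' u) u) (hb : ∀ u ∈ uIcc 0 t, ‖h'' u - L‖ ≤ ε) :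
    ‖h t - h 0 - t • h' 0 - (t ^ 2 / 2) • L‖ ≤ ε * t ^ 2 := by
  have hk : ∀ u ∈ uIcc 0 t, HasDerivAt (fun u => h u - u • h' 0 - (u ^ 2 / 2) • L)
      (h' u - h' 0 - u • L) u := by
    intro u hu
    refine (((hh u hu).sub ((hasDerivAt_id u).smul_const (h' 0))).sub
      (((hasDerivAt_pow 2 u).div_const 2).smul_const L)).congr_deriv ?_
    simp
  have hk' : ∀ u ∈ uIcc 0 t, ‖h' u - h' 0 - u • L - 0‖ ≤ ε * |t| := fun u hu => by
    have hsub : uIcc 0 u ⊆ uIcc 0 t := uIcc_subset_uIcc_left hu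
    calc ‖h' u - h' 0 - u • L - 0‖ ≤ ε * |u| := by
          simpa using norm_taylor_one_le (fun v hv => hh' v (hsub hv)) (fun v hv => hb v (hsub hv))
      _ ≤ ε * |t| := by
          refine mul_le_mul_of_nonneg_left ?_ ((norm_nonneg _).trans (hb 0 left_mem_uIcc))
          simpa using abs_sub_left_of_mem_uIcc hu
  convert norm_taylor_one_le hk hk' using 1
  · congr 1
    simp only [zero_smul, sub_zero, smul_zero, zero_pow two_ne_zero, zero_div]
    abel
  · rw [mul_assoc, abs_mul_abs_self, sq]

end Taylor

section IntegralCurve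

variable {E : Type*} [NormedAddCommGroup E] [NormedSpace ℝ E] {V : E → E} {c : ℝ → E}
  {x₀ : E} {r M t : ℝ}

theorem dist_integralCurve_le_of_nonneg (hc : ∀ u, HasDerivAt c (V (c u)) u)
    (hV : ∀ y ∈ closedBall x₀ r, ‖V y‖ < M) (hM : 0 ≤ M) (hr : dist (c 0) x₀ + M * t ≤ r) :
    ∀ u ∈ Icc 0 t, dist (c u) x₀ ≤ dist (c 0) x₀ + M * u := by
  simp only [dist_eq_norm] at hr ⊢
  refine image_norm_le_of_norm_deriv_right_lt_deriv_boundary (f := fun u => c u - x₀)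
    (fun u _ => ((hc u).sub_const x₀).continuousAt.continuousWithinAt)
    (fun u _ => ((hc u).sub_const x₀).hasDerivWithinAt) (by simp)
    (fun u => ((hasDerivAt_id u).const_mul M).const_add _) fun u hu hcu => ?_
  rw [mul_one]
  refine hV _ ?_
  rw [mem_closedBall, dist_eq_norm, hcu]
  nlinarith [hu.2]

theorem dist_integralCurve_le (hc : ∀ u, HasDerivAt c (V (c u)) u)
    (hV : ∀ y ∈ closedBall x₀ r, ‖V y‖ < M) (hM : 0 ≤ M) (hr : dist (c 0) x₀ + M * |t| ≤ r) :
    ∀ u ∈ uIcc 0 t, dist (c u) x₀ ≤ dist (c 0) x₀ + M * |u| := by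
  intro u hu
  rcases le_total 0 t with ht | ht
  · rw [uIcc_of_le ht] at hu
    rw [abs_of_nonneg ht] at hr
    rw [abs_of_nonneg hu.1]
    exact dist_integralCurve_le_of_nonneg hc hV hM hr u hu
  · rw [uIcc_of_ge ht] at hu
    rw [abs_of_nonpos ht] at hr
    rw [abs_of_nonpos hu.2]
    have hc_neg : ∀ u, HasDerivAt (fun u => c (-u)) ((-V) (c (-u))) u := fun u => by
      simpa [Function.comp_def] using (hc (-u)).scomp u (hasDerivAt_neg u)
    simpa using dist_integralCurve_le_of_nonneg hc_neg (by simpa using hV) hM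
      (by simpa using hr) (-u) ⟨neg_nonneg.2 hu.2, neg_le_neg hu.1⟩

end IntegralCurve

section Flow

variable {E F : Type*} [NormedAddCommGroup E] [NormedSpace ℝ E] [NormedAddCommGroup F]
  [NormedSpace ℝ F] {V : E → E} {Φ : ℝ → E → E} {g : E → F} {x : ℝ → E} {P₀ : E}

noncomputable def derivAlong (V : E → E) (g : E → F) : E → F := fun y => fderiv ℝ g y (V y)

@[simp]
theorem derivAlong_neg_field : derivAlong (-V) g = -derivAlong V g := by
  ext y; simp [derivAlong]

@[simp]
theorem derivAlong_neg : derivAlong V (-g) = -derivAlong V g := by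
  ext y; simp [derivAlong, fderiv_neg]

theorem ContDiff.derivAlong {m n : WithTop ℕ∞} (hg : ContDiff ℝ n g) (hV : ContDiff ℝ m V)
    (hmn : m + 1 ≤ n) : ContDiff ℝ m (derivAlong V g) :=
  (hg.fderiv_right hmn).clm_apply hV

structure IsFlowOf (V : E → E) (Φ : ℝ → E → E) : Prop where
  map_zero : ∀ y, Φ 0 y = y
  hasDerivAt : ∀ y t, HasDerivAt (fun t => Φ t y) (V (Φ t y)) t

namespace IsFlowOf

theorem neg (hΦ : IsFlowOf V Φ) : IsFlowOf (-V) (fun t => Φ (-t)) where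
  map_zero y := by simpa using hΦ.map_zero y
  hasDerivAt y t := by
    simpa [Function.comp_def] using (hΦ.hasDerivAt y (-t)).scomp t (hasDerivAt_neg t)

theorem hasDerivAt_comp (hΦ : IsFlowOf V Φ) {y : E} {t : ℝ} (hg : DifferentiableAt ℝ g (Φ t y)) :
    HasDerivAt (fun t => g (Φ t y)) (derivAlong V g (Φ t y)) t :=
  hg.hasFDerivAt.comp_hasDerivAt t (hΦ.hasDerivAt y t)

theorem eventually_forall_uIcc_mem (hΦ : IsFlowOf V Φ) (hV : ContinuousAt V P₀)
    (hx : Tendsto x (𝓝 0) (𝓝 P₀)) {U : Set E} (hU : U ∈ 𝓝 P₀) :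
    ∀ᶠ s in 𝓝 0, ∀ u ∈ uIcc 0 s, Φ u (x s) ∈ U := by
  set M := ‖V P₀‖ + 1
  obtain ⟨r, hr, hrU⟩ := nhds_basis_closedBall.mem_iff.1
    (inter_mem hU (hV.norm.eventually (gt_mem_nhds (lt_add_one ‖V P₀‖))))
  have hMs : ∀ᶠ s in 𝓝 (0 : ℝ), M * |s| ≤ r / 2 := by
    have : Tendsto (fun s : ℝ => M * |s|) (𝓝 0) (𝓝 0) :=
      (continuous_const.mul continuous_abs).tendsto' 0 0 (by simp)
    exact this.eventually (ge_mem_nhds (half_pos hr))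
  filter_upwards [hx (closedBall_mem_nhds P₀ (half_pos hr)), hMs] with s hxs hMs u hu
  have hdist := dist_integralCurve_le (t := s) (hΦ.hasDerivAt (x s)) (fun y hy => (hrU hy).2)
    (by positivity) (by rw [hΦ.map_zero]; linarith [mem_closedBall.1 hxs]) u hu
  have hus : M * |u| ≤ M * |s| := by
    refine mul_le_mul_of_nonneg_left ?_ (by positivity)
    simpa using abs_sub_left_of_mem_uIcc hu
  refine (hrU (mem_closedBall.2 ?_)).1
  rw [hΦ.map_zero] at hdist
  linarith [mem_closedBall.1 hxs]

theorem tendsto_apply_self (hΦ : IsFlowOf V Φ) (hV : ContinuousAt V P₀)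
    (hx : Tendsto x (𝓝 0) (𝓝 P₀)) : Tendsto (fun s => Φ s (x s)) (𝓝 0) (𝓝 P₀) :=
  fun _ hU => (hΦ.eventually_forall_uIcc_mem hV hx hU).mono fun s hs => hs s right_mem_uIcc

theorem isLittleO_taylor_one (hΦ : IsFlowOf V Φ) (hV : ContinuousAt V P₀)
    (hx : Tendsto x (𝓝 0) (𝓝 P₀)) (hg : Differentiable ℝ g)
    (hgV : ContinuousAt (derivAlong V g) P₀) :
    (fun s => g (Φ s (x s)) - g (x s) - s • derivAlong V g P₀) =o[𝓝 0] fun s => s := by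
  refine isLittleO_iff.2 fun ε hε => ?_
  filter_upwards [hΦ.eventually_forall_uIcc_mem hV hx (hgV (closedBall_mem_nhds _ hε))]
    with s hs
  simpa [hΦ.map_zero] using norm_taylor_one_le
    (fun u _ => hΦ.hasDerivAt_comp (hg _)) (fun u hu => mem_closedBall_iff_norm.1 (hs u hu))

theorem isLittleO_taylor_two (hΦ : IsFlowOf V Φ) (hV : ContinuousAt V P₀)
    (hx : Tendsto x (𝓝 0) (𝓝 P₀)) (hg : Differentiable ℝ g)
    (hgV : Differentiable ℝ (derivAlong V g))
    (hgVV : ContinuousAt (derivAlong V (derivAlong V g)) P₀) :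
    (fun s => g (Φ s (x s)) - g (x s) - s • derivAlong V g (x s)
      - (s ^ 2 / 2) • derivAlong V (derivAlong V g) P₀) =o[𝓝 0] fun s => s ^ 2 := by
  refine isLittleO_iff.2 fun ε hε => ?_
  filter_upwards [hΦ.eventually_forall_uIcc_mem hV hx (hgVV (closedBall_mem_nhds _ hε))]
    with s hs
  simpa [hΦ.map_zero] using norm_taylor_two_le
    (fun u _ => hΦ.hasDerivAt_comp (hg _)) (fun u _ => hΦ.hasDerivAt_comp (hgV _))
    (fun u hu => mem_closedBall_iff_norm.1 (hs u hu))

end IsFlowOf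

end Flow

theorem tendsto_div_sq_of_isLittleO {F : ℝ → ℝ} {B : ℝ}
    (h : (fun s => F s - s ^ 2 * B) =o[𝓝 0] fun s => s ^ 2) :
    Tendsto (fun s => F s / s ^ 2) (𝓝[≠] 0) (𝓝 B) := by
  have := ((h.mono (nhdsWithin_le_nhds (s := {0}ᶜ))).tendsto_div_nhds_zero).add_const B
  rw [zero_add] at this
  refine this.congr' (eventually_nhdsWithin_of_forall fun s hs => ?_)
  have hs : s ≠ 0 := hs
  field_simp
  ring

theorem isLittleO_flow_quadrilateral {E : Type*} [NormedAddCommGroup E] [NormedSpace ℝ E]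
    {ξ η : E → E} {φ ψ : ℝ → E → E} {f : E → ℝ} (hξ : ContDiff ℝ 1 ξ) (hη : ContDiff ℝ 1 η)
    (hφ : IsFlowOf ξ φ) (hψ : IsFlowOf η ψ) (hf : ContDiff ℝ 2 f) (P₀ : E) :
    (fun s => f (ψ (-s) (φ (-s) (ψ s (φ s P₀)))) - f P₀
      - s ^ 2 * (derivAlong ξ (derivAlong η f) P₀ - derivAlong η (derivAlong ξ f) P₀))
      =o[𝓝 0] fun s => s ^ 2 := by
  have hf₁ : Differentiable ℝ f := hf.differentiable (by norm_num)
  have hD₁ : ∀ {V}, ContDiff ℝ 1 V → Differentiable ℝ (derivAlong V f) := fun hV =>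
    (hf.derivAlong hV le_rfl).differentiable one_ne_zero
  have hD₂ : ∀ {V W}, ContDiff ℝ 1 V → ContDiff ℝ 1 W →
      ContinuousAt (derivAlong W (derivAlong V f)) P₀ := fun hV hW =>
    ((hf.derivAlong hV le_rfl).derivAlong (hW.of_le zero_le_one) le_rfl).continuous.continuousAt
  have hξ₀ := hξ.continuous.continuousAt (x := P₀)
  have hη₀ := hη.continuous.continuousAt (x := P₀)
  have T₀ : Tendsto (fun _ : ℝ => P₀) (𝓝 0) (𝓝 P₀) := tendsto_const_nhds
  have T₁ := hφ.tendsto_apply_self hξ₀ T₀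
  have T₂ := hψ.tendsto_apply_self hη₀ T₁
  have T₃ := hφ.neg.tendsto_apply_self hξ₀.neg T₂
  have L₁ := hφ.isLittleO_taylor_two hξ₀ T₀ hf₁ (hD₁ hξ) (hD₂ hξ hξ)
  have L₂ := hψ.isLittleO_taylor_two hη₀ T₁ hf₁ (hD₁ hη) (hD₂ hη hη)
  have L₃ := hφ.neg.isLittleO_taylor_two hξ₀.neg T₂ hf₁ (hD₁ hξ.neg) (hD₂ hξ.neg hξ.neg)
  have L₄ := hψ.neg.isLittleO_taylor_two hη₀.neg T₃ hf₁ (hD₁ hη.neg) (hD₂ hη.neg hη.neg)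
  have K₁ := hφ.isLittleO_taylor_one hξ₀ T₀ (hD₁ hξ) (hD₂ hξ hξ)
  have K₂ := hψ.isLittleO_taylor_one hη₀ T₁ (hD₁ hξ) (hD₂ hξ hη)
  have K₃ := hψ.isLittleO_taylor_one hη₀ T₁ (hD₁ hη) (hD₂ hη hη)
  have K₄ := hφ.neg.isLittleO_taylor_one hξ₀.neg T₂ (hD₁ hη) (hD₂ hη hξ.neg)
  have hK := ((isBigO_refl (fun s : ℝ => s) (𝓝 0)).mul_isLittleO
    (((K₁.add K₂).add K₃).add K₄)).congr_right fun s => (sq s).symm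
  refine ((((L₁.add L₂).add L₃).add L₄).sub hK).congr_left fun s => ?_
  simp only [derivAlong_neg_field, derivAlong_neg, Pi.neg_apply, smul_eq_mul]
  ring

/-- The second-order gap of the closed-up flow quadrilateral measures the Lie bracket:
with `P₄(s) = ψ_{-s}(φ_{-s}(ψ_s(φ_s(P₀))))`,
`(f(P₄(s)) - f(P₀))/s² → [ξ,η]_{P₀}(f)` as `s → 0`. -/
theorem flow_quadrilateral_gap_bracket_closed
    {d : ℕ} (ξ η : (Fin d → ℝ) → (Fin d → ℝ))
    (hξ : ContDiff ℝ (⊤ : ℕ∞) ξ) (hη : ContDiff ℝ (⊤ : ℕ∞) η)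
    (φ ψ : ℝ → (Fin d → ℝ) → (Fin d → ℝ))
    (hφ0 : ∀ x, φ 0 x = x) (hψ0 : ∀ x, ψ 0 x = x)
    (hφ : ∀ x s, HasDerivAt (fun t => φ t x) (ξ (φ s x)) s)
    (hψ : ∀ x s, HasDerivAt (fun t => ψ t x) (η (ψ s x)) s)
    (P₀ : Fin d → ℝ) (f : (Fin d → ℝ) → ℝ) (hf : ContDiff ℝ (⊤ : ℕ∞) f) :
    Tendsto
      (fun s : ℝ => (f (ψ (-s) (φ (-s) (ψ s (φ s P₀)))) - f P₀) / s ^ 2)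
      (nhdsWithin 0 {s : ℝ | s ≠ 0})
      (nhds (fderiv ℝ (fun x => fderiv ℝ f x (η x)) P₀ (ξ P₀)
        - fderiv ℝ (fun x => fderiv ℝ f x (ξ x)) P₀ (η P₀))) :=
  tendsto_div_sq_of_isLittleO <| isLittleO_flow_quadrilateral (hξ.of_le ENat.LEInfty.out)
    (hη.of_le ENat.LEInfty.out) ⟨hφ0, hφ⟩ ⟨hψ0, hψ⟩ (hf.of_le ENat.LEInfty.out) P₀
end
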